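/- Let G be a d-regular bipartite graph with parts X and Y, let c \ge 1 be a real number, and let t be a positive integer with t \le d/(8c). Let C \subseteq X \cup Y be a cut with value |\nabla(C)| \le t d. Then the number of closed t-contracting subsets A \subseteq X satisfying |A \triangle (C \cap X)| \le c t and |N(A) \triangle (C \cap Y)| \le c t is at most 4^{t}. -/

import Mathlib

/-!
Fix a member `A₀` of the family. Any two members lie within `2ct ≤ d/4` of each other (both are
close to `C ∩ X`), and a closed `t`-contracting `A` sends at most `(t-1)d` edges from `N(A)` back
to `X \ A`. Hence every vertex of `A \ A₀` and every vertex of `N(A₀) \ N(A)` is heavy: it has at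
least `3d/4` of its edges between `X \ A₀` and `N(A₀)`. There are so few such edges that at most
`2t` vertices are heavy. A closed set is determined by its neighborhood, and `N(A)` is determined
by `A \ A₀` and `N(A₀) \ N(A)`, so the family has at most `2^{2t}` members.
-/


open scoped Classical

noncomputable section

variable {V : Type*}

/-- The square of a graph: vertices at distance 1 or 2 are adjacent. -/
def gsq (G : SimpleGraph V) : SimpleGraph V where
  Adj u v := u ≠ v ∧ (G.Adj u v ∨ ∃ w, G.Adj u w ∧ G.Adj w v)
  symm := by
    constructor
    rintro u v ⟨h1, h2⟩
    refine ⟨h1.symm, ?_⟩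
    rcases h2 with h | ⟨w, hw1, hw2⟩
    · exact Or.inl h.symm
    · exact Or.inr ⟨w, hw2.symm, hw1.symm⟩
  loopless := by constructor; rintro u ⟨h, -⟩; exact h rfl

/-- `A` is 2-linked: the subgraph of the square of `G` induced on `A` is connected. -/
def TwoLinked (G : SimpleGraph V) (A : Finset V) : Prop :=
  ((gsq G).induce (A : Set V)).Connected

variable [Fintype V] [DecidableEq V]

/-- The neighborhood of a vertex, as a `Finset`. -/
def nbrF (G : SimpleGraph V) (v : V) : Finset V :=
  Finset.univ.filter (fun u => G.Adj v u)

/-- The neighborhood `N(A)` of a set of vertices. -/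
def nbr (G : SimpleGraph V) (A : Finset V) : Finset V :=
  Finset.univ.filter (fun u => ∃ a ∈ A, G.Adj a u)

/-- The closure `[A] = {x ∈ X : N(x) ⊆ N(A)}` of `A` within the part `X`. -/
def cl (G : SimpleGraph V) (X A : Finset V) : Finset V :=
  X.filter (fun x => nbrF G x ⊆ nbr G A)

/-- `A` is closed (within the part `X`) if `[A] = A`. -/
def IsClosedSet (G : SimpleGraph V) (X A : Finset V) : Prop :=
  cl G X A = A

/-- The 2-linked components of `A`: equivalence classes of the reachability
relation in the square of `G` restricted to `A`. -/
def comps (G : SimpleGraph V) (A : Finset V) : Finset (Finset V) :=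
  A.image (fun a =>
    A.filter (fun b => Relation.ReflTransGen
      (fun u v => (gsq G).Adj u v ∧ u ∈ A ∧ v ∈ A) a b))

/-- The number of independent sets of `G` (including the empty set). -/
def numInd (G : SimpleGraph V) : ℕ :=
  (Finset.univ.filter (fun s : Finset V => ∀ u ∈ s, ∀ v ∈ s, ¬ G.Adj u v)).card

/-- `A ⊆ X` is `t`-contracting if `|N(A)| < |[A]| + t`. -/
def Contracting (G : SimpleGraph V) (X : Finset V) (t : ℤ) (A : Finset V) : Prop :=
  ((nbr G A).card : ℤ) < ((cl G X A).card : ℤ) + t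

/-- `D_A`: product over the 2-linked components `A'` of `A` of the number of
2-linked `B ⊆ A'` with `N(B) = N(A')`. -/
def DA (G : SimpleGraph V) (A : Finset V) : ℕ :=
  ∏ A' ∈ comps G A,
    (A'.powerset.filter (fun B => TwoLinked G B ∧ nbr G B = nbr G A')).card

/-- The value `|∇(C)|` of the cut `C`: the number of edges with exactly one
endpoint in `C`. -/
def cutVal (G : SimpleGraph V) (C : Finset V) : ℕ :=
  ∑ u ∈ C, (nbrF G u \ C).card

/-- `B` is a polymer of `P_A` (a nonempty 2-linked subset of `X_A = X \ N²(A)`)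
that is not `t0`-contracting. -/
def IsPolymerIn (G : SimpleGraph V) (X : Finset V) (t0 : ℤ) (A B : Finset V) : Prop :=
  B.Nonempty ∧ TwoLinked G B ∧ B ⊆ X \ nbr G (nbr G A) ∧ ¬ Contracting G X t0 B

/-- `Ξ_A`: sum over unordered compatible collections of non-`t0`-contracting
polymers from `P_A` of `2^{-∑|N(B_i)|}`. -/
def Xi (G : SimpleGraph V) (X : Finset V) (t0 : ℤ) (A : Finset V) : ℝ :=
  ∑ F ∈ Finset.univ.filter (fun F : Finset (Finset V) =>
      (∀ B ∈ F, IsPolymerIn G X t0 A B) ∧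
      (∀ B ∈ F, ∀ B' ∈ F, B ≠ B' → Disjoint (nbr G B) (nbr G B'))),
    ∏ B ∈ F, ((2:ℝ) ^ (nbr G B).card)⁻¹

/-- `𝒢(w,t)`: polymers `B ⊆ X` with `|N(B)| = w` and `|N(B)| - |[B]| = t`. -/
def GG (G : SimpleGraph V) (X : Finset V) (w t : ℤ) : Finset (Finset V) :=
  X.powerset.filter (fun B => B.Nonempty ∧ TwoLinked G B ∧
    ((nbr G B).card : ℤ) = w ∧ ((nbr G B).card : ℤ) - ((cl G X B).card : ℤ) = t)

/-- `G` is bipartite with parts `X` and `Y`. -/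
def IsBipartiteWith (G : SimpleGraph V) (X Y : Finset V) : Prop :=
  Disjoint X Y ∧ X ∪ Y = Finset.univ ∧
    ∀ u v, G.Adj u v → (u ∈ X ∧ v ∈ Y) ∨ (u ∈ Y ∧ v ∈ X)

/-- `G` is `d`-regular. -/
def IsRegularDeg (G : SimpleGraph V) (d : ℕ) : Prop :=
  ∀ v, (nbrF G v).card = d

/-- `d_S(v)`: number of neighbors of `v` in `S`. -/
def degIn (G : SimpleGraph V) (v : V) (S : Finset V) : ℕ := (nbrF G v ∩ S).card

/-- `W_{d/2}`: vertices of `N(A)` with at least `d/2` neighbors in `A`. -/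
def Wbig (G : SimpleGraph V) (d : ℕ) (A : Finset V) : Finset V :=
  (nbr G A).filter (fun y => (d : ℝ) / 2 ≤ (degIn G y A : ℝ))

/-- `F` is an essential set for `A`: `N(A) ⊇ F ⊇ W_{d/2}` and `N(F) ⊇ [A]`. -/
def EssentialSet (G : SimpleGraph V) (X : Finset V) (d : ℕ) (A F : Finset V) : Prop :=
  F ⊆ nbr G A ∧ Wbig G d A ⊆ F ∧ cl G X A ⊆ nbr G F

/-- `(S,T)` is a `γ'`-container for `A`, where `t = |N(A)| - |[A]|`. -/
def IsContainer (G : SimpleGraph V) (X Y : Finset V) (d : ℕ) (γ' : ℝ)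
    (A S T : Finset V) : Prop :=
  cl G X A ⊆ S ∧ Wbig G d A ⊆ T ∧ T ⊆ nbr G A ∧
  (∀ v ∈ S, (degIn G v (Y \ T) : ℝ) ≤
      γ' * (((nbr G A).card : ℝ) - ((cl G X A).card : ℝ))) ∧
  (∀ v ∈ Y \ T, (degIn G v S : ℝ) ≤
      γ' * (((nbr G A).card : ℝ) - ((cl G X A).card : ℝ)))

set_option linter.unusedSectionVars false

section Neighborhoods

variable {G : SimpleGraph V}

lemma mem_nbr {A : Finset V} {u : V} : u ∈ nbr G A ↔ ∃ a ∈ A, G.Adj a u := by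
  simp [nbr]

lemma mem_nbrF {v u : V} : u ∈ nbrF G v ↔ G.Adj v u := by
  simp [nbrF]

lemma nbrF_subset_nbr {A : Finset V} {x : V} (hx : x ∈ A) : nbrF G x ⊆ nbr G A :=
  fun _ hu => mem_nbr.2 ⟨x, hx, mem_nbrF.1 hu⟩

lemma nbr_sdiff_subset_nbr_sdiff (A B : Finset V) : nbr G A \ nbr G B ⊆ nbr G (A \ B) := by
  intro y hy
  obtain ⟨⟨a, ha, hay⟩, hyB⟩ := And.imp_left mem_nbr.1 (Finset.mem_sdiff.1 hy)
  exact mem_nbr.2 ⟨a, Finset.mem_sdiff.2 ⟨ha, fun haB => hyB (mem_nbr.2 ⟨a, haB, hay⟩)⟩, hay⟩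

lemma nbr_mono {A B : Finset V} (h : A ⊆ B) : nbr G A ⊆ nbr G B := fun _ hy =>
  let ⟨a, ha, hay⟩ := mem_nbr.1 hy
  mem_nbr.2 ⟨a, h ha, hay⟩

lemma nbr_eq_sdiff_union (A B : Finset V) :
    nbr G A = (nbr G B \ (nbr G B \ nbr G A)) ∪ nbr G (A \ B) := by
  ext y
  have h₁ : y ∈ nbr G A \ nbr G B → y ∈ nbr G (A \ B) := (nbr_sdiff_subset_nbr_sdiff A B ·)
  have h₂ : y ∈ nbr G (A \ B) → y ∈ nbr G A := (nbr_mono Finset.sdiff_subset ·)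
  simp only [Finset.mem_union, Finset.mem_sdiff] at h₁ ⊢
  tauto

lemma IsClosedSet.eq_of_nbr_eq {X A B : Finset V} (hA : IsClosedSet G X A)
    (hB : IsClosedSet G X B) (h : nbr G A = nbr G B) : A = B := by
  rw [← hA, ← hB, cl, cl, h]

end Neighborhoods

section Degrees

variable {G : SimpleGraph V}

lemma degIn_mono (v : V) {S T : Finset V} (h : S ⊆ T) : degIn G v S ≤ degIn G v T :=
  Finset.card_le_card (Finset.inter_subset_inter_left h)

lemma sum_degIn_comm (S T : Finset V) : ∑ y ∈ T, degIn G y S = ∑ x ∈ S, degIn G x T := by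
  simp only [degIn, nbrF, Finset.card_eq_sum_ones, Finset.sum_filter, Finset.filter_inter,
    Finset.univ_inter]
  rw [Finset.sum_comm]
  simp only [G.adj_comm]

lemma degIn_le_degIn_sdiff_add_card (v : V) (S B : Finset V) :
    degIn G v S ≤ degIn G v (S \ B) + B.card := by
  calc degIn G v S ≤ ((nbrF G v ∩ (S \ B)) ∪ B).card := by
        refine Finset.card_le_card fun u hu => ?_
        by_cases huB : u ∈ B <;> simp_all
    _ ≤ degIn G v (S \ B) + B.card := Finset.card_union_le _ _

lemma degIn_le_card_sdiff {A B : Finset V} {y : V} (hy : y ∉ nbr G B) :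
    degIn G y A ≤ (A \ B).card := by
  refine Finset.card_le_card fun x hx => ?_
  obtain ⟨hxy, hxA⟩ := Finset.mem_inter.1 hx
  exact Finset.mem_sdiff.2 ⟨hxA, fun hxB => hy (mem_nbr.2 ⟨x, hxB, (mem_nbrF.1 hxy).symm⟩)⟩

lemma degIn_add_card_nbrF_sdiff (v : V) (T : Finset V) :
    degIn G v T + (nbrF G v \ T).card = (nbrF G v).card :=
  Finset.card_inter_add_card_sdiff _ _

end Degrees

section Bipartite

variable {G : SimpleGraph V} {X Y : Finset V} {d : ℕ}

lemma IsBipartiteWith.nbrF_subset {y : V} (hbip : IsBipartiteWith G X Y) (hy : y ∈ Y) :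
    nbrF G y ⊆ X := by
  intro u hu
  rcases hbip.2.2 y u (mem_nbrF.1 hu) with ⟨hyX, -⟩ | ⟨-, huX⟩
  · exact absurd hy (Finset.disjoint_left.1 hbip.1 hyX)
  · exact huX

lemma IsBipartiteWith.nbr_subset {A : Finset V} (hbip : IsBipartiteWith G X Y) (hA : A ⊆ X) :
    nbr G A ⊆ Y := by
  intro y hy
  obtain ⟨a, ha, hay⟩ := mem_nbr.1 hy
  rcases hbip.2.2 a y hay with ⟨-, hyY⟩ | ⟨haY, -⟩
  · exact hyY
  · exact absurd haY (Finset.disjoint_left.1 hbip.1 (hA ha))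

lemma degIn_add_degIn_sdiff (hbip : IsBipartiteWith G X Y) (hreg : IsRegularDeg G d)
    (A : Finset V) {y : V} (hy : y ∈ Y) :
    degIn G y A + degIn G y (X \ A) = d := by
  have hsplit : nbrF G y ∩ (X \ A) = nbrF G y \ A := by
    rw [← Finset.inter_sdiff_assoc, Finset.inter_eq_left.2 (hbip.nbrF_subset hy)]
  rw [degIn, degIn, hsplit, Finset.card_inter_add_card_sdiff, hreg]

/-- Double counting the `d|N(A)|` edges at `N(A)`: `d|A|` of them end in `A`. -/
lemma sum_degIn_sdiff_add_mul_card (hbip : IsBipartiteWith G X Y) (hreg : IsRegularDeg G d)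
    {A : Finset V} (hA : A ⊆ X) :
    ∑ y ∈ nbr G A, degIn G y (X \ A) + d * A.card = d * (nbr G A).card := by
  have hinA : ∑ y ∈ nbr G A, degIn G y A = d * A.card := by
    rw [sum_degIn_comm, Finset.sum_congr rfl fun x hx => by
      rw [degIn, Finset.inter_eq_left.2 (nbrF_subset_nbr hx), hreg x]]
    simp [mul_comm]
  have htotal := Finset.sum_congr rfl fun y hy =>
    degIn_add_degIn_sdiff hbip hreg A (hbip.nbr_subset hA hy)
  rw [Finset.sum_add_distrib, hinA, Finset.sum_const, smul_eq_mul] at htotal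
  linarith

lemma sum_degIn_sdiff_le (hbip : IsBipartiteWith G X Y) (hreg : IsRegularDeg G d)
    {A : Finset V} (hA : A ⊆ X) {m : ℕ} (hm : (nbr G A).card ≤ A.card + m) :
    ∑ y ∈ nbr G A, degIn G y (X \ A) ≤ m * d := by
  have h := sum_degIn_sdiff_add_mul_card hbip hreg hA
  nlinarith [Nat.mul_le_mul_left d hm]

end Bipartite

def heavy (G : SimpleGraph V) (d : ℕ) (S T : Finset V) : Finset V :=
  S.filter fun v => 3 * d ≤ 4 * degIn G v T

section Heavy

variable {G : SimpleGraph V} {d : ℕ}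

lemma mem_heavy {S T : Finset V} {v : V} :
    v ∈ heavy G d S T ↔ v ∈ S ∧ 3 * d ≤ 4 * degIn G v T :=
  Finset.mem_filter

lemma card_mul_le_sum_degIn_heavy (S T : Finset V) :
    (heavy G d S T).card * (3 * d) ≤ 4 * ∑ v ∈ heavy G d S T, degIn G v T := by
  rw [Finset.mul_sum]
  exact Finset.card_nsmul_le_sum _ _ _ fun v hv => (mem_heavy.1 hv).2

/-- A heavy vertex of `T` keeps `7d/12` of its edges after the heavy part of `S` is removed, so
the two heavy parts are charged to disjoint sets of edges. -/
lemma card_heavy_add_card_heavy_le (hd : 0 < d) {m : ℕ} (hm : 8 * m ≤ d) {S T : Finset V}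
    (he : ∑ x ∈ S, degIn G x T ≤ m * d) :
    7 * ((heavy G d S T).card + (heavy G d T S).card) ≤ 12 * m := by
  set HS := heavy G d S T
  set HT := heavy G d T S
  have hHS : HS ⊆ S := Finset.filter_subset _ _
  have hsplit : ∑ x ∈ S \ HS, degIn G x T + ∑ x ∈ HS, degIn G x T = ∑ x ∈ S, degIn G x T :=
    Finset.sum_sdiff hHS
  have hcardHS : 3 * HS.card ≤ 4 * m := by
    refine Nat.le_of_mul_le_mul_right ?_ hd
    calc 3 * HS.card * d = HS.card * (3 * d) := by ring
      _ ≤ 4 * ∑ x ∈ HS, degIn G x T := card_mul_le_sum_degIn_heavy S T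
      _ ≤ 4 * (m * d) := by omega
      _ = 4 * m * d := by ring
  have hlight : ∀ y ∈ HT, 7 * d ≤ 12 * degIn G y (S \ HS) := fun y hy => by
    have := degIn_le_degIn_sdiff_add_card (G := G) y S HS
    have := (mem_heavy.1 hy).2
    omega
  have hHT : HT.card * (7 * d) ≤ 12 * ∑ x ∈ S \ HS, degIn G x T := by
    calc HT.card * (7 * d) ≤ ∑ y ∈ HT, 12 * degIn G y (S \ HS) :=
          Finset.card_nsmul_le_sum _ _ _ hlight
      _ = 12 * ∑ x ∈ S \ HS, degIn G x HT := by rw [← Finset.mul_sum, sum_degIn_comm]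
      _ ≤ 12 * ∑ x ∈ S \ HS, degIn G x T := by
          gcongr with x
          exact degIn_mono x (Finset.filter_subset _ _)
  have := card_mul_le_sum_degIn_heavy (G := G) (d := d) S T
  refine Nat.le_of_mul_le_mul_right ?_ hd
  nlinarith

end Heavy

section ClosedFamilies

variable {G : SimpleGraph V} {X Y : Finset V} {d : ℕ}

lemma card_heavy_add_card_heavy_nbr_le (hbip : IsBipartiteWith G X Y)
    (hreg : IsRegularDeg G d) (hd : 0 < d) {m : ℕ} (hm : 8 * m ≤ d) {A : Finset V}
    (hA : A ⊆ X) (hAm : (nbr G A).card ≤ A.card + m) :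
    7 * ((heavy G d (X \ A) (nbr G A)).card + (heavy G d (nbr G A) (X \ A)).card) ≤ 12 * m :=
  card_heavy_add_card_heavy_le hd hm <|
    (sum_degIn_comm (X \ A) (nbr G A)).symm.trans_le (sum_degIn_sdiff_le hbip hreg hA hAm)

/-- A neighbor of `A` outside `N(B)` has at most `|A \ B|` neighbors in `A`. -/
lemma nbr_sdiff_subset_heavy (hbip : IsBipartiteWith G X Y) (hreg : IsRegularDeg G d)
    {A B : Finset V} (hA : A ⊆ X) (hAB : 4 * (A \ B).card ≤ d) :
    nbr G A \ nbr G B ⊆ heavy G d (nbr G A) (X \ A) := by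
  intro y hy
  obtain ⟨hyA, hyB⟩ := Finset.mem_sdiff.1 hy
  have hsplit := degIn_add_degIn_sdiff hbip hreg A (hbip.nbr_subset hA hyA)
  have hfew := degIn_le_card_sdiff (A := A) hyB
  exact mem_heavy.2 ⟨hyA, by omega⟩

/-- A vertex of `A \ B` has all its neighbors outside `N(B)` in `N(A) \ N(B)`. -/
lemma sdiff_subset_heavy (hreg : IsRegularDeg G d) {A B : Finset V} (hA : A ⊆ X)
    (hAB : 4 * (nbr G A \ nbr G B).card ≤ d) :
    A \ B ⊆ heavy G d (X \ B) (nbr G B) := by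
  intro x hx
  obtain ⟨hxA, hxB⟩ := Finset.mem_sdiff.1 hx
  have hsplit := degIn_add_card_nbrF_sdiff (G := G) x (nbr G B)
  have hfew : (nbrF G x \ nbr G B).card ≤ (nbr G A \ nbr G B).card :=
    Finset.card_le_card (Finset.sdiff_subset_sdiff (nbrF_subset_nbr hxA) le_rfl)
  rw [hreg] at hsplit
  exact mem_heavy.2 ⟨Finset.mem_sdiff.2 ⟨hA hxA, hxB⟩, by omega⟩

theorem card_le_four_pow_of_card_sdiff_le (hbip : IsBipartiteWith G X Y)
    (hreg : IsRegularDeg G d) (hd : 0 < d) {m : ℕ} (hm : 8 * m ≤ d) (𝒜 : Finset (Finset V))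
    (hsub : ∀ A ∈ 𝒜, A ⊆ X) (hclosed : ∀ A ∈ 𝒜, IsClosedSet G X A)
    (hnbr : ∀ A ∈ 𝒜, (nbr G A).card ≤ A.card + m)
    (hclose : ∀ A ∈ 𝒜, ∀ B ∈ 𝒜, 4 * (A \ B).card ≤ d) :
    𝒜.card ≤ 4 ^ m := by
  obtain rfl | ⟨A₀, hA₀⟩ := 𝒜.eq_empty_or_nonempty
  · simp
  set P := heavy G d (X \ A₀) (nbr G A₀)
  set Q := heavy G d (nbr G A₀) (X \ A₀)
  have hPQ : 7 * (P.card + Q.card) ≤ 12 * m :=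
    card_heavy_add_card_heavy_nbr_le hbip hreg hd hm (hsub A₀ hA₀) (hnbr A₀ hA₀)
  have hgain : ∀ A ∈ 𝒜, A \ A₀ ⊆ P := fun A hA => by
    refine sdiff_subset_heavy hreg (hsub A hA) ?_
    have hsmall := Finset.card_le_card
      (nbr_sdiff_subset_heavy hbip hreg (hsub A hA) (hclose A hA A₀ hA₀))
    have := card_heavy_add_card_heavy_nbr_le hbip hreg hd hm (hsub A hA) (hnbr A hA)
    omega
  have hloss : ∀ A ∈ 𝒜, nbr G A₀ \ nbr G A ⊆ Q := fun A hA =>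
    nbr_sdiff_subset_heavy hbip hreg (hsub A₀ hA₀) (hclose A₀ hA₀ A hA)
  have hinj : Set.InjOn (fun A => (A \ A₀, nbr G A₀ \ nbr G A)) 𝒜 := by
    intro A hA B hB hAB
    simp only [Prod.mk.injEq] at hAB
    refine (hclosed A hA).eq_of_nbr_eq (hclosed B hB) ?_
    rw [nbr_eq_sdiff_union A A₀, nbr_eq_sdiff_union B A₀, hAB.1, hAB.2]
  calc 𝒜.card ≤ (P.powerset ×ˢ Q.powerset).card :=
        Finset.card_le_card_of_injOn _ (fun A hA => Finset.mem_product.2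
          ⟨Finset.mem_powerset.2 (hgain A hA), Finset.mem_powerset.2 (hloss A hA)⟩) hinj
    _ = 2 ^ (P.card + Q.card) := by simp [pow_add]
    _ ≤ 2 ^ (2 * m) := Nat.pow_le_pow_right two_pos (by omega)
    _ = 4 ^ m := by rw [pow_mul]; norm_num

end ClosedFamilies

lemma card_sdiff_le_card_symmDiff_add (A B K : Finset V) :
    (A \ B).card ≤ ((A \ K) ∪ (K \ A)).card + ((B \ K) ∪ (K \ B)).card := by
  refine (Finset.card_le_card fun x hx => ?_).trans (Finset.card_union_le _ _)
  simp only [Finset.mem_union, Finset.mem_sdiff] at hx ⊢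
  tauto

theorem stmt_6_general (G : SimpleGraph V) (X Y : Finset V) (d : ℕ)
    (hbip : IsBipartiteWith G X Y) (hreg : IsRegularDeg G d)
    (c : ℝ) (hc : 1 ≤ c) (t : ℕ) (ht : 0 < t)
    (htd : (t : ℝ) ≤ (d : ℝ) / (8 * c))
    (C : Finset V) :
    (X.powerset.filter (fun A => IsClosedSet G X A ∧ Contracting G X (t : ℤ) A ∧
        (((A \ (C ∩ X)) ∪ ((C ∩ X) \ A)).card : ℝ) ≤ c * t ∧
        (((nbr G A \ (C ∩ Y)) ∪ ((C ∩ Y) \ nbr G A)).card : ℝ) ≤ c * t)).card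
      ≤ 4 ^ t := by
  have h8ct : 8 * c * t ≤ d := by rwa [le_div_iff₀ (by positivity), mul_comm] at htd
  have h8t : 8 * t ≤ d := by exact_mod_cast (show (8 * t : ℝ) ≤ d by nlinarith)
  refine (card_le_four_pow_of_card_sdiff_le hbip hreg (m := t - 1) (by omega) (by omega) _
    (fun A hA => ?_) (fun A hA => ?_) (fun A hA => ?_) (fun A hA B hB => ?_)).trans
    (Nat.pow_le_pow_right (by norm_num) (Nat.sub_le t 1))
  all_goals simp only [Finset.mem_filter, Finset.mem_powerset] at hA
  · exact hA.1
  · exact hA.2.1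
  · have hcon : ((nbr G A).card : ℤ) < (cl G X A).card + t := hA.2.2.1
    rw [hA.2.1] at hcon
    omega
  · simp only [Finset.mem_filter] at hB
    have hAB := Nat.cast_le (α := ℝ) |>.2 (card_sdiff_le_card_symmDiff_add A B (C ∩ X))
    have : (4 * (A \ B).card : ℝ) ≤ d := by
      push_cast at hAB
      linarith [hA.2.2.2.1, hB.2.2.2.1]
    exact_mod_cast this

/-- given a cut `C` of value at most `td` in a `d`-regular bipartite
graph, with `c ≥ 1` and `0 < t ≤ d/(8c)`, there are at most `4^t` closed
`t`-contracting `A ⊆ X` with `|A △ (C ∩ X)| ≤ ct` and `|N(A) △ (C ∩ Y)| ≤ ct`. -/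
theorem stmt_6 (G : SimpleGraph V) (X Y : Finset V) (d : ℕ)
    (hbip : IsBipartiteWith G X Y) (hreg : IsRegularDeg G d)
    (c : ℝ) (hc : 1 ≤ c) (t : ℕ) (ht : 0 < t)
    (htd : (t : ℝ) ≤ (d : ℝ) / (8 * c))
    (C : Finset V) (hcut : cutVal G C ≤ t * d) :
    (X.powerset.filter (fun A => IsClosedSet G X A ∧ Contracting G X (t : ℤ) A ∧
        (((A \ (C ∩ X)) ∪ ((C ∩ X) \ A)).card : ℝ) ≤ c * t ∧
        (((nbr G A \ (C ∩ Y)) ∪ ((C ∩ Y) \ nbr G A)).card : ℝ) ≤ c * t)).card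
      ≤ 4 ^ t :=
  stmt_6_general G X Y d hbip hreg c hc t ht htd C
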